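/- arXiv:2112.01217 — 4 statements merged into one kernel-verified Lean document; each statement's English description precedes it below -/
import Mathlib

section
/- Let w : B_1 → ℝ be subharmonic on the unit ball B_1 ⊂ ℝ^d with 0 ≤ w ≤ 1, and suppose |{w = 0} ∩ B_{1/4}| ≥ μ|B_{1/4}| for some μ > 0. Then w ≤ 1 - μ/8^d on B_{1/2}. -/
open MeasureTheory Metric

/-- Key integral bound: if `w ≤ 1` on a measurable set `U` of finite volume, `w` is
integrable on `U`, and `w ≤ 1 - a` on a (possibly non-measurable) subset `Z ⊆ U`, then
`∫_U w ≤ |U| - a |Z|`. -/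
lemma key_bound {d : ℕ} (U Z : Set (EuclideanSpace ℝ (Fin d))) (hU : MeasurableSet U)
    (hUfin : volume U ≠ ⊤) (w : EuclideanSpace ℝ (Fin d) → ℝ)
    (hw : IntegrableOn w U) (hw1 : ∀ y ∈ U, w y ≤ 1) (hZU : Z ⊆ U)
    (a : ℝ) (ha : 0 ≤ a) (hZ : ∀ y ∈ Z, w y ≤ 1 - a) :
    ∫ y in U, w y ≤ (volume U).toReal - a * (volume Z).toReal := by
  haveI : IsFiniteMeasure (volume.restrict U) :=
    ⟨by rwa [Measure.restrict_apply_univ, lt_top_iff_ne_top]⟩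
  set g : EuclideanSpace ℝ (Fin d) → ℝ := hw.1.mk w with hgdef
  have hgm : StronglyMeasurable g := hw.1.stronglyMeasurable_mk
  have hae : w =ᵐ[volume.restrict U] g := hw.1.ae_eq_mk
  set S : Set (EuclideanSpace ℝ (Fin d)) := U ∩ g ⁻¹' (Set.Iic (1 - a)) with hSdef
  have hS : MeasurableSet S := hU.inter (hgm.measurable measurableSet_Iic)
  have hSU : S ⊆ U := Set.inter_subset_left
  -- volume Z ≤ volume S
  have hZS : volume Z ≤ volume S := by
    have hT : (volume.restrict U) {y | w y ≠ g y} = 0 := hae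
    have hsub : Z ⊆ S ∪ {y | w y ≠ g y} := by
      intro y hy
      by_cases h : w y = g y
      · exact Or.inl ⟨hZU hy, by simp [Set.mem_preimage, ← h]; exact hZ y hy⟩
      · exact Or.inr h
    calc volume Z = volume (Z ∩ U) := by rw [Set.inter_eq_self_of_subset_left hZU]
      _ = (volume.restrict U) Z := (Measure.restrict_apply' hU).symm
      _ ≤ (volume.restrict U) (S ∪ {y | w y ≠ g y}) := measure_mono hsub
      _ ≤ (volume.restrict U) S + (volume.restrict U) {y | w y ≠ g y} := measure_union_le _ _
      _ = volume (S ∩ U) + 0 := by rw [hT, Measure.restrict_apply' hU]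
      _ = volume S := by rw [add_zero, Set.inter_eq_self_of_subset_left hSU]
  have hSfin : volume S ≠ ⊤ := (lt_of_le_of_lt (measure_mono hSU) hUfin.lt_top).ne
  -- the comparison function
  set f : EuclideanSpace ℝ (Fin d) → ℝ := fun y => 1 - a * S.indicator (fun _ => (1:ℝ)) y
    with hfdef
  have hfint : Integrable f (volume.restrict U) :=
    (integrable_const 1).sub (((integrable_const 1).indicator hS).const_mul a)
  have hgint : Integrable g (volume.restrict U) := hw.congr hae
  have hle : g ≤ᶠ[ae (volume.restrict U)] f := by
    filter_upwards [hae, ae_restrict_mem hU] with y h1y h2y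
    by_cases hyS : y ∈ S
    · simp only [hfdef, Set.indicator_of_mem hyS, mul_one]
      exact hyS.2
    · simp only [hfdef, Set.indicator_of_notMem hyS, mul_zero, sub_zero]
      rw [← h1y]; exact hw1 y h2y
  have hintf : ∫ y in U, f y = (volume U).toReal - a * (volume S).toReal := by
    rw [hfdef]
    rw [integral_sub (integrable_const 1) (((integrable_const 1).indicator hS).const_mul a)]
    rw [integral_const_mul, setIntegral_const, integral_indicator hS,
      Measure.restrict_restrict hS, Set.inter_eq_self_of_subset_left hSU, setIntegral_const]
    simp [Measure.real]
  calc ∫ y in U, w y = ∫ y in U, g y := integral_congr_ae hae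
    _ ≤ ∫ y in U, f y := integral_mono_ae hgint hfint hle
    _ = (volume U).toReal - a * (volume S).toReal := hintf
    _ ≤ (volume U).toReal - a * (volume Z).toReal := by
        have := ENNReal.toReal_mono hSfin hZS
        nlinarith

set_option maxHeartbeats 1000000 in
/-- De Giorgi oscillation estimate on `B_{1/4}`: a subharmonic `w` with `0 ≤ w ≤ 1`
vanishing on a set of measure `≥ μ |B_{1/4}|` satisfies `w ≤ 1 - μ/2^d` on `B_{1/4}`. -/
theorem stmt_1 (d : ℕ) (hd : 0 < d) (μ : ℝ) (hμ : 0 < μ)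
    (w : EuclideanSpace ℝ (Fin d) → ℝ)
    (hsub : ∀ x r, 0 < r → ball x r ⊆ ball (0 : EuclideanSpace ℝ (Fin d)) 1 →
      w x ≤ ⨍ y in ball x r, w y)
    (h0 : ∀ x ∈ ball (0 : EuclideanSpace ℝ (Fin d)) 1, 0 ≤ w x)
    (h1 : ∀ x ∈ ball (0 : EuclideanSpace ℝ (Fin d)) 1, w x ≤ 1)
    (hvanish : μ * (volume (ball (0 : EuclideanSpace ℝ (Fin d)) (1/4))).toReal ≤
      (volume {x ∈ ball (0 : EuclideanSpace ℝ (Fin d)) (1/4) | w x = 0}).toReal) :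
    ∀ x₀ ∈ ball (0 : EuclideanSpace ℝ (Fin d)) (1/2), w x₀ ≤ 1 - μ / 8 ^ d := by
  haveI : NeZero d := ⟨hd.ne'⟩
  set c : ℝ := (volume (ball (0 : EuclideanSpace ℝ (Fin d)) 1)).toReal with hcdef
  have hcpos : 0 < c := ENNReal.toReal_pos (measure_ball_pos volume 0 one_pos).ne'
    measure_ball_lt_top.ne
  have hball : ∀ (x : EuclideanSpace ℝ (Fin d)) (r : ℝ), 0 ≤ r → (volume (ball x r)).toReal = r ^ d * c := by
    intro x r hr
    rw [Measure.addHaar_ball volume x hr, ENNReal.toReal_mul,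
      ENNReal.toReal_ofReal (pow_nonneg hr _), finrank_euclideanSpace_fin]
  set Z : Set (EuclideanSpace ℝ (Fin d)) := {x ∈ ball (0 : EuclideanSpace ℝ (Fin d)) (1/4) | w x = 0} with hZdef
  have hZsub : Z ⊆ ball (0 : EuclideanSpace ℝ (Fin d)) (1/4) := fun y hy => hy.1
  have hZlow : μ * ((1/4 : ℝ) ^ d * c) ≤ (volume Z).toReal := by
    rw [← hball 0 (1/4) (by norm_num)]; exact hvanish
  have hμ1 : μ ≤ 1 := by
    have h2 : (volume Z).toReal ≤ (1/4 : ℝ) ^ d * c := by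
      rw [← hball 0 (1/4) (by norm_num)]
      exact ENNReal.toReal_mono measure_ball_lt_top.ne (measure_mono hZsub)
    have h3 : 0 < (1/4 : ℝ) ^ d * c := by positivity
    nlinarith
  have h2pow : (1:ℝ) ≤ 2 ^ d := one_le_pow₀ (by norm_num)
  have h8pow : (1:ℝ) ≤ 8 ^ d := one_le_pow₀ (by norm_num)
  -- Step 1 : w ≤ 1 - μ/2^d on B_{1/4}
  have step1 : ∀ x ∈ ball (0 : EuclideanSpace ℝ (Fin d)) (1/4), w x ≤ 1 - μ / 2 ^ d := by
    intro x hx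
    have hxn : ‖x‖ < 1/4 := mem_ball_zero_iff.mp hx
    have hsubset : ball x (1/2) ⊆ ball (0 : EuclideanSpace ℝ (Fin d)) 1 := by
      intro y hy
      have : ‖y - x‖ < 1/2 := mem_ball_iff_norm.mp hy
      rw [mem_ball_zero_iff]
      calc ‖y‖ = ‖(y - x) + x‖ := by rw [sub_add_cancel]
        _ ≤ ‖y - x‖ + ‖x‖ := norm_add_le _ _
        _ < 1 := by linarith
    have hZU : Z ⊆ ball x (1/2) := by
      intro y hy
      have hyn : ‖y‖ < 1/4 := mem_ball_zero_iff.mp (hZsub hy)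
      rw [mem_ball_iff_norm]
      calc ‖y - x‖ ≤ ‖y‖ + ‖x‖ := norm_sub_le _ _
        _ < 1/2 := by linarith
    by_cases hint : IntegrableOn w (ball x (1/2))
    · have hbd := key_bound (ball x (1/2)) Z measurableSet_ball measure_ball_lt_top.ne w
        hint (fun y hy => h1 y (hsubset hy)) hZU 1 zero_le_one
        (fun y hy => by rw [hy.2]; norm_num)
      have havg := hsub x (1/2) (by norm_num) hsubset
      rw [setAverage_eq] at havg
      have hu : (volume (ball x (1/2))).toReal = (1/2:ℝ)^d * c := hball x (1/2) (by norm_num)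
      have hupos : (0:ℝ) < (1/2:ℝ)^d * c := by positivity
      have h2d : (0:ℝ) < (2:ℝ)^d := by positivity
      calc w x ≤ (volume (ball x (1/2))).toReal⁻¹ • ∫ y in ball x (1/2), w y := havg
        _ ≤ ((1/2:ℝ)^d * c)⁻¹ * ((1/2:ℝ)^d * c - 1 * (volume Z).toReal) := by
            rw [smul_eq_mul, hu]
            apply mul_le_mul_of_nonneg_left _ (by positivity)
            rw [hu] at hbd; exact hbd
        _ ≤ ((1/2:ℝ)^d * c)⁻¹ * ((1/2:ℝ)^d * c - μ * ((1/4:ℝ)^d * c)) := by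
            apply mul_le_mul_of_nonneg_left _ (by positivity)
            nlinarith
        _ = 1 - μ / 2 ^ d := by
            rw [show ((1:ℝ)/2)^d = 1/2^d from by rw [div_pow, one_pow],
              show ((1:ℝ)/4)^d = 1/(2^d*2^d) from by rw [div_pow, one_pow, ← mul_pow]; norm_num]
            field_simp
    · have havg := hsub x (1/2) (by norm_num) hsubset
      rw [setAverage_eq, integral_undef hint, smul_zero] at havg
      have h2d : (0:ℝ) < 2^d := by positivity
      have : μ / 2^d ≤ 1 := by rw [div_le_one h2d]; linarith
      linarith
  -- Step 2
  intro x₀ hx₀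
  have hx₀n : ‖x₀‖ < 1/2 := mem_ball_zero_iff.mp hx₀
  have hsubset : ball x₀ (1/2) ⊆ ball (0 : EuclideanSpace ℝ (Fin d)) 1 := by
    intro y hy
    have : ‖y - x₀‖ < 1/2 := mem_ball_iff_norm.mp hy
    rw [mem_ball_zero_iff]
    calc ‖y‖ = ‖(y - x₀) + x₀‖ := by rw [sub_add_cancel]
      _ ≤ ‖y - x₀‖ + ‖x₀‖ := norm_add_le _ _
      _ < 1 := by linarith
  set cpt : EuclideanSpace ℝ (Fin d) := (4:ℝ)⁻¹ • x₀ with hcpt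
  have hcptn : ‖cpt‖ = ‖x₀‖ / 4 := by
    rw [hcpt, norm_smul, Real.norm_eq_abs, abs_of_nonneg (by norm_num : (0:ℝ) ≤ (4:ℝ)⁻¹)]
    ring
  set Z₂ : Set (EuclideanSpace ℝ (Fin d)) := ball cpt (1/8) with hZ₂
  have hZ₂sub : Z₂ ⊆ ball (0 : EuclideanSpace ℝ (Fin d)) (1/4) := by
    intro y hy
    have : ‖y - cpt‖ < 1/8 := mem_ball_iff_norm.mp hy
    rw [mem_ball_zero_iff]
    calc ‖y‖ = ‖(y - cpt) + cpt‖ := by rw [sub_add_cancel]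
      _ ≤ ‖y - cpt‖ + ‖cpt‖ := norm_add_le _ _
      _ < 1/4 := by rw [hcptn]; linarith
  have hZ₂U : Z₂ ⊆ ball x₀ (1/2) := by
    intro y hy
    have h1 : ‖y - cpt‖ < 1/8 := mem_ball_iff_norm.mp hy
    have h2 : ‖cpt - x₀‖ = 3 * ‖x₀‖ / 4 := by
      have : cpt - x₀ = (-(3/4) : ℝ) • x₀ := by rw [hcpt]; module
      rw [this, norm_smul, Real.norm_eq_abs, abs_neg,
        abs_of_nonneg (by norm_num : (0:ℝ) ≤ 3/4)]; ring
    rw [mem_ball_iff_norm]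
    calc ‖y - x₀‖ = ‖(y - cpt) + (cpt - x₀)‖ := by rw [sub_add_sub_cancel]
      _ ≤ ‖y - cpt‖ + ‖cpt - x₀‖ := norm_add_le _ _
      _ < 1/2 := by rw [h2]; linarith
  have hμ2d : 0 ≤ μ / 2 ^ d := by positivity
  by_cases hint : IntegrableOn w (ball x₀ (1/2))
  · have hbd := key_bound (ball x₀ (1/2)) Z₂ measurableSet_ball measure_ball_lt_top.ne w
      hint (fun y hy => h1 y (hsubset hy)) hZ₂U (μ / 2^d) hμ2d
      (fun y hy => step1 y (hZ₂sub hy))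
    have havg := hsub x₀ (1/2) (by norm_num) hsubset
    rw [setAverage_eq] at havg
    have hu : (volume (ball x₀ (1/2))).toReal = (1/2:ℝ)^d * c := hball x₀ (1/2) (by norm_num)
    have hz : (volume Z₂).toReal = (1/8:ℝ)^d * c := hball cpt (1/8) (by norm_num)
    have hupos : (0:ℝ) < (1/2:ℝ)^d * c := by positivity
    calc w x₀ ≤ (volume (ball x₀ (1/2))).toReal⁻¹ • ∫ y in ball x₀ (1/2), w y := havg
      _ ≤ ((1/2:ℝ)^d * c)⁻¹ * ((1/2:ℝ)^d * c - (μ/2^d) * ((1/8:ℝ)^d * c)) := by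
          rw [smul_eq_mul, hu]
          apply mul_le_mul_of_nonneg_left _ (by positivity)
          rw [hu, hz] at hbd; exact hbd
      _ = 1 - μ / 8 ^ d := by
          rw [show ((1:ℝ)/2)^d = 1/2^d from by rw [div_pow, one_pow],
            show ((1:ℝ)/8)^d = 1/(2^d*(2^d*2^d)) from by
              rw [div_pow, one_pow, ← mul_pow, ← mul_pow]; norm_num,
            show (8:ℝ)^d = 2^d*(2^d*2^d) from by rw [← mul_pow, ← mul_pow]; norm_num]
          have h2d : (0:ℝ) < 2^d := by positivity
          field_simp
  · have havg := hsub x₀ (1/2) (by norm_num) hsubset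
    rw [setAverage_eq, integral_undef hint, smul_zero] at havg
    have h8d : (0:ℝ) < 8^d := by positivity
    have : μ / 8^d ≤ 1 := by rw [div_le_one h8d]; linarith
    linarith
end

section
/- Let φ : B_{1/2} → ℝ be a nonnegative measurable function, C > 0, p > 0 constants, and suppose (i) w ≤ C φ^{-p} on B_{1/2} ∩ {φ > 0} for some nonnegative measurable w, and (ii) the level set estimate |{0 < φ < s} ∩ B_{1/2}| ≤ Λ s |B_{1/2}| holds for all s > 0. Then with α = 1/(2p), one has ∫_{B_{1/2} ∩ {φ>0}} w^α dx ≤ C^α |B_{1/2}| (1 + Λ α p/(1 - α p)) = C^α |B_{1/2}| (1 + Λ). -/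
open MeasureTheory Metric Set

/-- The pointwise bound `w ≤ C φ^{-p}` together with the level-set estimate for `φ`
gives an `L^α` bound for `w` with `α = 1/(2p)`. -/
theorem stmt_6 (d : ℕ) (hd : 0 < d) (C p Λ : ℝ) (hC : 0 < C) (hp : 0 < p) (hΛ : 0 < Λ)
    (φ w : EuclideanSpace ℝ (Fin d) → ℝ)
    (hφmeas : Measurable φ) (hwmeas : Measurable w)
    (hφ : ∀ x, 0 ≤ φ x) (hw : ∀ x, 0 ≤ w x)
    (hbound : ∀ x ∈ ball (0 : EuclideanSpace ℝ (Fin d)) (1/2),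
      0 < φ x → w x ≤ C * φ x ^ (-p))
    (hlevel : ∀ s > (0:ℝ),
      (volume {x ∈ ball (0 : EuclideanSpace ℝ (Fin d)) (1/2) | 0 < φ x ∧ φ x < s}).toReal ≤
        Λ * s * (volume (ball (0 : EuclideanSpace ℝ (Fin d)) (1/2))).toReal) :
    ∫ x in {x ∈ ball (0 : EuclideanSpace ℝ (Fin d)) (1/2) | 0 < φ x}, w x ^ (1/(2*p)) ≤
      C ^ (1/(2*p)) * (volume (ball (0 : EuclideanSpace ℝ (Fin d)) (1/2))).toReal * (1 + Λ) := by
  have hp' : p ≠ 0 := hp.ne'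
  set α : ℝ := 1/(2*p) with hαdef
  have hα : 0 < α := by positivity
  set Bl := ball (0 : EuclideanSpace ℝ (Fin d)) (1/2) with hBl
  set S := {x ∈ Bl | 0 < φ x} with hSdef
  set Mr := (volume Bl).toReal with hMr
  have hMfin : volume Bl ≠ ⊤ := measure_ball_lt_top.ne
  have hSsub : S ⊆ Bl := fun x hx => hx.1
  set μ := volume.restrict S with hμ
  set f : EuclideanSpace ℝ (Fin d) → ℝ := fun x => C ^ α * φ x ^ (-(1/2) : ℝ) with hfdef
  have hfmeas : Measurable f := by fun_prop
  have hfnn : ∀ x, 0 ≤ f x := fun x =>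
    mul_nonneg (Real.rpow_nonneg hC.le _) (Real.rpow_nonneg (hφ x) _)
  have hCα : 0 < C ^ α := Real.rpow_pos_of_pos hC _
  have hC2 : C ^ α * C ^ α = C ^ (1/p) := by
    rw [← Real.rpow_add hC]; congr 1; rw [hαdef]; ring
  -- Step A: pointwise bound on S
  have hptwise : ∀ x ∈ S, w x ^ α ≤ f x := by
    intro x hx
    have hφx : 0 < φ x := hx.2
    have h1 : w x ^ α ≤ (C * φ x ^ (-p)) ^ α :=
      Real.rpow_le_rpow (hw x) (hbound x hx.1 hφx) hα.le
    have h2 : (C * φ x ^ (-p)) ^ α = C ^ α * φ x ^ (-(1/2) : ℝ) := by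
      rw [Real.mul_rpow hC.le (Real.rpow_nonneg (hφ x) _), ← Real.rpow_mul (hφ x)]
      have hexp : -p * α = -(1/2) := by rw [hαdef]; field_simp
      rw [hexp]
    calc w x ^ α ≤ (C * φ x ^ (-p)) ^ α := h1
      _ = f x := h2
  -- Step B: bound the level set measure
  have hlevelset : ∀ t : ℝ, 0 < t →
      μ {a | t < f a} ≤ ENNReal.ofReal (Λ * (C ^ (1/p) / t ^ 2) * Mr) := by
    intro t ht
    have hmble : MeasurableSet {a | t < f a} := measurableSet_lt measurable_const hfmeas
    rw [hμ, Measure.restrict_apply hmble]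
    have hsub : {a | t < f a} ∩ S ⊆ {x ∈ Bl | 0 < φ x ∧ φ x < C ^ (1/p) / t ^ 2} := by
      rintro x ⟨hxf, hxB, hxφ⟩
      refine ⟨hxB, hxφ, ?_⟩
      have hu : 0 < φ x ^ ((1/2 : ℝ)) := Real.rpow_pos_of_pos hxφ _
      have huu : φ x ^ ((1/2 : ℝ)) * φ x ^ ((1/2 : ℝ)) = φ x := by
        rw [← Real.rpow_add hxφ]; norm_num
      have hinv : φ x ^ (-(1/2) : ℝ) = (φ x ^ ((1/2 : ℝ)))⁻¹ := by
        rw [Real.rpow_neg (hφ x)]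
      have hxf' : t < C ^ α * (φ x ^ ((1/2 : ℝ)))⁻¹ := by
        have h0 : t < f x := hxf
        simp only [hfdef] at h0
        rwa [hinv] at h0
      have htu : t * (φ x ^ ((1/2 : ℝ))) < C ^ α := by
        rw [mul_comm] at hxf'
        calc t * (φ x ^ ((1/2 : ℝ))) < ((φ x ^ ((1/2 : ℝ)))⁻¹ * C ^ α) * (φ x ^ ((1/2 : ℝ))) := by
              exact mul_lt_mul_of_pos_right hxf' hu
          _ = C ^ α := by field_simp
      rw [lt_div_iff₀ (by positivity)]
      nlinarith [mul_pos ht hu, hu]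
    calc volume ({a | t < f a} ∩ S)
        ≤ volume {x ∈ Bl | 0 < φ x ∧ φ x < C ^ (1/p) / t ^ 2} := measure_mono hsub
      _ = ENNReal.ofReal ((volume {x ∈ Bl | 0 < φ x ∧ φ x < C ^ (1/p) / t ^ 2}).toReal) := by
          rw [ENNReal.ofReal_toReal]
          exact ((measure_mono (fun x hx => hx.1)).trans_lt measure_ball_lt_top).ne
      _ ≤ ENNReal.ofReal (Λ * (C ^ (1/p) / t ^ 2) * Mr) := by
          apply ENNReal.ofReal_le_ofReal
          exact hlevel _ (by positivity)
  have hlevelM : ∀ t : ℝ, μ {a | t < f a} ≤ volume Bl := by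
    intro t
    have hmble : MeasurableSet {a | t < f a} := measurableSet_lt measurable_const hfmeas
    rw [hμ, Measure.restrict_apply hmble]
    exact measure_mono (fun x hx => hSsub hx.2)
  -- Step C: layer cake
  have key : ∫⁻ x, ENNReal.ofReal (f x) ∂μ = ∫⁻ t in Ioi (0:ℝ), μ {a | t < f a} :=
    lintegral_eq_lintegral_meas_lt μ (Filter.Eventually.of_forall hfnn) hfmeas.aemeasurable
  set t₀ : ℝ := C ^ α with ht₀def
  have ht₀ : 0 < t₀ := hCα
  set K : ℝ := Λ * C ^ (1/p) * Mr with hKdef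
  have hKnn : 0 ≤ K := by
    have : 0 ≤ Mr := ENNReal.toReal_nonneg
    positivity
  -- split the outer integral
  have hsplit : Ioi (0:ℝ) = Ioc 0 t₀ ∪ Ioi t₀ := (Ioc_union_Ioi_eq_Ioi ht₀.le).symm
  have hdisj : Disjoint (Ioc (0:ℝ) t₀) (Ioi t₀) := Ioc_disjoint_Ioi le_rfl
  have hpiece1 : ∫⁻ t in Ioc (0:ℝ) t₀, μ {a | t < f a} ≤ ENNReal.ofReal (Mr * t₀) := by
    calc ∫⁻ t in Ioc (0:ℝ) t₀, μ {a | t < f a}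
        ≤ ∫⁻ _ in Ioc (0:ℝ) t₀, volume Bl := setLIntegral_mono measurable_const
          (fun t _ => hlevelM t)
      _ = volume Bl * volume (Ioc (0:ℝ) t₀) := setLIntegral_const _ _
      _ = ENNReal.ofReal (Mr * t₀) := by
          rw [Real.volume_Ioc, sub_zero, ← ENNReal.ofReal_toReal hMfin, ← ENNReal.ofReal_mul
            ENNReal.toReal_nonneg]
  have hrw2 : ∀ t : ℝ, t₀ < t → Λ * (C ^ (1/p) / t ^ 2) * Mr = K * t ^ (-2 : ℝ) := by
    intro t ht
    have ht' : 0 < t := ht₀.trans ht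
    have : t ^ (-2 : ℝ) = (t ^ 2)⁻¹ := by
      rw [Real.rpow_neg ht'.le, ← Real.rpow_natCast t 2]; norm_num
    rw [this, hKdef]; field_simp
  have hintble : IntegrableOn (fun t : ℝ => K * t ^ (-2 : ℝ)) (Ioi t₀) :=
    (integrableOn_Ioi_rpow_of_lt (by norm_num) ht₀).const_mul K
  have hpiece2 : ∫⁻ t in Ioi t₀, μ {a | t < f a} ≤ ENNReal.ofReal (K * t₀⁻¹) := by
    have hmono : ∫⁻ t in Ioi t₀, μ {a | t < f a}
        ≤ ∫⁻ t in Ioi t₀, ENNReal.ofReal (K * t ^ (-2 : ℝ)) := by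
      apply setLIntegral_mono (g := fun t => ENNReal.ofReal (K * t ^ (-2 : ℝ))) (by fun_prop)
      intro t ht
      rw [← hrw2 t ht]
      exact hlevelset t (ht₀.trans ht)
    have heq : ∫⁻ t in Ioi t₀, ENNReal.ofReal (K * t ^ (-2 : ℝ))
        = ENNReal.ofReal (∫ t in Ioi t₀, K * t ^ (-2 : ℝ)) := by
      rw [← ofReal_integral_eq_lintegral_ofReal hintble]
      filter_upwards [ae_restrict_mem measurableSet_Ioi] with t ht
      exact mul_nonneg hKnn (Real.rpow_nonneg (ht₀.le.trans (le_of_lt ht)) _)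
    have hval : ∫ t in Ioi t₀, K * t ^ (-2 : ℝ) = K * t₀⁻¹ := by
      rw [integral_const_mul, integral_Ioi_rpow_of_lt (by norm_num) ht₀]
      norm_num [Real.rpow_neg_one]
    calc ∫⁻ t in Ioi t₀, μ {a | t < f a}
        ≤ ∫⁻ t in Ioi t₀, ENNReal.ofReal (K * t ^ (-2 : ℝ)) := hmono
      _ = ENNReal.ofReal (K * t₀⁻¹) := by rw [heq, hval]
  have hKt₀ : K * t₀⁻¹ = Λ * (C ^ α * Mr) := by
    rw [hKdef, ht₀def, ← hC2]
    field_simp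
    ring
  -- combine
  have hL : ∫⁻ x, ENNReal.ofReal (w x ^ α) ∂μ ≤ ENNReal.ofReal (C ^ α * Mr * (1 + Λ)) := by
    have hmono : ∫⁻ x, ENNReal.ofReal (w x ^ α) ∂μ ≤ ∫⁻ x, ENNReal.ofReal (f x) ∂μ := by
      rw [hμ]
      apply setLIntegral_mono (by fun_prop : Measurable fun x => ENNReal.ofReal (f x))
      intro x hx
      exact ENNReal.ofReal_le_ofReal (hptwise x hx)
    calc ∫⁻ x, ENNReal.ofReal (w x ^ α) ∂μ
        ≤ ∫⁻ x, ENNReal.ofReal (f x) ∂μ := hmono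
      _ = ∫⁻ t in Ioi (0:ℝ), μ {a | t < f a} := key
      _ = (∫⁻ t in Ioc (0:ℝ) t₀, μ {a | t < f a}) + ∫⁻ t in Ioi t₀, μ {a | t < f a} := by
          rw [hsplit, lintegral_union measurableSet_Ioi hdisj]
      _ ≤ ENNReal.ofReal (Mr * t₀) + ENNReal.ofReal (K * t₀⁻¹) := add_le_add hpiece1 hpiece2
      _ = ENNReal.ofReal (C ^ α * Mr * (1 + Λ)) := by
          rw [← ENNReal.ofReal_add (by positivity) (by rw [hKt₀]; positivity)]
          congr 1
          rw [hKt₀, ht₀def]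
          ring
  -- conclude
  have hint_eq : ∫ x, w x ^ α ∂μ = (∫⁻ x, ENNReal.ofReal (w x ^ α) ∂μ).toReal := by
    rw [hμ]
    exact integral_eq_lintegral_of_nonneg_ae
      (Filter.Eventually.of_forall fun x => Real.rpow_nonneg (hw x) _)
      (show Measurable fun x => w x ^ α by fun_prop).aestronglyMeasurable
  calc ∫ x, w x ^ α ∂μ
      = (∫⁻ x, ENNReal.ofReal (w x ^ α) ∂μ).toReal := hint_eq
    _ ≤ (ENNReal.ofReal (C ^ α * Mr * (1 + Λ))).toReal :=
        ENNReal.toReal_mono ENNReal.ofReal_ne_top hL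
    _ = C ^ α * Mr * (1 + Λ) := ENNReal.toReal_ofReal
        (mul_nonneg (mul_nonneg hCα.le ENNReal.toReal_nonneg) (by positivity))
end

section
/- Let Ω ⊂ B_1 ⊂ ℝ^d be open and w : B_1 → ℝ continuous, nonnegative, vanishing identically on B_1 \ Ω, harmonic in Ω and subharmonic on B_1. Suppose Ω satisfies the exterior density bound |B_r(z) \ Ω| ≥ μ|B_r(z)| for every z ∈ ∂Ω ∩ B_1 and r ∈ (0, 1 - |z|), and suppose ∫_{B_1} w^ε dx ≤ 1 for some ε > 0. Then there is a constant M > 0, depending only on d, μ, ε, such that w ≤ M on B_{1/2}. -/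
open MeasureTheory Metric

/-- Krylov–Safonov-type estimate: a nonnegative function, harmonic in `Ω`, subharmonic
in `B₁`, vanishing outside `Ω`, with exterior density bound on `Ω` and `∫ w^ε ≤ 1`,
is bounded on `B_{1/2}` by a constant depending only on `d`, `μ`, `ε`. -/
theorem stmt_7 (d : ℕ) (hd : 0 < d) (μ ε : ℝ) (hμ : 0 < μ) (hε : 0 < ε) :
    ∃ M > (0:ℝ), ∀ (Ω : Set (EuclideanSpace ℝ (Fin d))) (w : EuclideanSpace ℝ (Fin d) → ℝ),
      IsOpen Ω → Ω ⊆ ball 0 1 →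
      Continuous w → (∀ x, 0 ≤ w x) →
      (∀ x ∈ ball (0 : EuclideanSpace ℝ (Fin d)) 1 \ Ω, w x = 0) →
      (∀ x r, 0 < r → ball x r ⊆ Ω → w x = ⨍ y in ball x r, w y) →
      (∀ x r, 0 < r → ball x r ⊆ ball (0 : EuclideanSpace ℝ (Fin d)) 1 →
        w x ≤ ⨍ y in ball x r, w y) →
      (∀ z ∈ frontier Ω ∩ ball (0 : EuclideanSpace ℝ (Fin d)) 1,
        ∀ r, 0 < r → r < 1 - ‖z‖ →
        μ * (volume (ball z r)).toReal ≤ (volume (ball z r \ Ω)).toReal) →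
      (∫ x in ball (0 : EuclideanSpace ℝ (Fin d)) 1, w x ^ ε) ≤ 1 →
      ∀ x ∈ ball (0 : EuclideanSpace ℝ (Fin d)) (1/2), w x ≤ M := by
  set E := EuclideanSpace ℝ (Fin d) with hE
  set t : ℝ := min ε 2⁻¹ with ht_def
  have ht0 : 0 < t := lt_min hε (by norm_num)
  have ht1 : t < 1 := lt_of_le_of_lt (min_le_right _ _) (by norm_num)
  have htε : t ≤ ε := min_le_left _ _
  set c := (volume (ball (0:E) 1)).toReal with hc_def
  have hc : 0 < c :=
    ENNReal.toReal_pos (measure_ball_pos volume _ (by norm_num)).ne' measure_ball_lt_top.ne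
  set p : ℝ := (d:ℝ) / t with hp_def
  have hp : 0 < p := div_pos (Nat.cast_pos.2 hd) ht0
  set C₀ : ℝ := 2 ^ d * ((1 + c) / c) * ((2:ℝ) ^ p) ^ (1 - t) with hC₀_def
  have h2p : (0:ℝ) < (2:ℝ) ^ p := Real.rpow_pos_of_pos (by norm_num) _
  have hC₀ : 0 < C₀ := by
    apply mul_pos (mul_pos (by positivity) (div_pos (by linarith) hc))
    exact Real.rpow_pos_of_pos h2p _
  refine ⟨(4:ℝ) ^ p * C₀ ^ (1/t), by positivity, ?_⟩
  intro Ω w _ _ hw hw0 _ _ hsub _ hint x hx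
  -- the weight function and its maximum point
  set F : E → ℝ := fun y => (3/4 - ‖y‖) ^ p * w y with hF_def
  have hFcont : Continuous F :=
    ((continuous_const.sub continuous_norm).rpow_const (fun y => Or.inr hp.le)).mul hw
  obtain ⟨x₀, hx₀mem, hx₀max⟩ :=
    (isCompact_closedBall (0:E) (3/4)).exists_isMaxOn
      ⟨0, mem_closedBall_self (by norm_num)⟩ hFcont.continuousOn
  have hx₀n : ‖x₀‖ ≤ 3/4 := mem_closedBall_zero_iff.mp hx₀mem
  -- key claim
  have key : F x₀ ≤ C₀ ^ (1/t) := by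
    rcases le_or_gt (F x₀) 0 with h0 | h0
    · exact h0.trans (Real.rpow_pos_of_pos hC₀ _).le
    set δ : ℝ := 3/4 - ‖x₀‖ with hδ_def
    have hFx₀ : F x₀ = δ ^ p * w x₀ := rfl
    have hδ0 : 0 ≤ δ := by rw [hδ_def]; linarith
    have hW : 0 < w x₀ := by
      rcases (hw0 x₀).lt_or_eq with h | h
      · exact h
      · exfalso; rw [hFx₀, ← h, mul_zero] at h0; exact lt_irrefl _ h0
    have hδ : 0 < δ := by
      rcases hδ0.lt_or_eq with h | h
      · exact h
      · exfalso; rw [hFx₀, ← h, Real.zero_rpow hp.ne', zero_mul] at h0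
        exact lt_irrefl _ h0
    set ρ : ℝ := δ / 2 with hρ_def
    have hρ : 0 < ρ := half_pos hδ
    have hδ34 : δ ≤ 3/4 := by rw [hδ_def]; linarith [norm_nonneg x₀]
    have hsball : ball x₀ ρ ⊆ ball (0:E) 1 := by
      intro y hy
      have h1 : ‖y‖ - ‖x₀‖ ≤ dist y x₀ := by
        rw [dist_eq_norm]; exact norm_sub_norm_le y x₀
      have h2 : dist y x₀ < ρ := mem_ball.mp hy
      rw [mem_ball_zero_iff]
      linarith [hδ_def, hρ_def]
    -- sup bound on the small ball
    have hB : ∀ y ∈ ball x₀ ρ, w y ≤ 2 ^ p * w x₀ := by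
      intro y hy
      have h2 : dist y x₀ < ρ := mem_ball.mp hy
      have h1 : ‖y‖ - ‖x₀‖ ≤ dist y x₀ := by
        rw [dist_eq_norm]; exact norm_sub_norm_le y x₀
      have hy34 : ρ ≤ 3/4 - ‖y‖ := by
        linarith [hδ_def, hρ_def]
      have hyc : y ∈ closedBall (0:E) (3/4) := by
        rw [mem_closedBall_zero_iff]; linarith
      have hb1 : ρ ^ p * w y ≤ F y :=
        mul_le_mul_of_nonneg_right (Real.rpow_le_rpow hρ.le hy34 hp.le) (hw0 y)
      have hb2 : F y ≤ δ ^ p * w x₀ := hx₀max hyc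
      have hδρ : δ ^ p = 2 ^ p * ρ ^ p := by
        rw [← Real.mul_rpow (by norm_num) hρ.le]
        congr 1; rw [hρ_def]; ring
      have hρp : 0 < ρ ^ p := Real.rpow_pos_of_pos hρ _
      have := hb1.trans hb2
      rw [hδρ] at this
      nlinarith
    -- integrability facts
    have hw_int : IntegrableOn w (ball x₀ ρ) volume :=
      (hw.continuousOn.integrableOn_compact (isCompact_closedBall x₀ ρ)).mono_set
        ball_subset_closedBall
    have hwt_cont : Continuous fun y : E => w y ^ t :=
      hw.rpow_const (fun y => Or.inr ht0.le)
    have hwt_int1 : IntegrableOn (fun y : E => w y ^ t) (ball (0:E) 1) volume :=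
      (hwt_cont.continuousOn.integrableOn_compact (isCompact_closedBall _ _)).mono_set
        ball_subset_closedBall
    have hwt_int : IntegrableOn (fun y : E => w y ^ t) (ball x₀ ρ) volume :=
      hwt_int1.mono_set hsball
    have hwε_int : IntegrableOn (fun y : E => w y ^ ε) (ball (0:E) 1) volume :=
      ((hw.rpow_const (fun y => Or.inr hε.le)).continuousOn.integrableOn_compact
        (isCompact_closedBall _ _)).mono_set ball_subset_closedBall
    have hone_int : IntegrableOn (fun _ : E => (1:ℝ)) (ball (0:E) 1) volume :=
      integrableOn_const measure_ball_lt_top.ne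
    have hsum_int : IntegrableOn (fun y : E => w y ^ ε + 1) (ball (0:E) 1) volume :=
      hwε_int.add hone_int
    -- L^t bound
    have hI2 : ∫ y in ball x₀ ρ, w y ^ t ≤ 1 + c := by
      have step1 : ∫ y in ball x₀ ρ, w y ^ t ≤ ∫ y in ball (0:E) 1, w y ^ t :=
        setIntegral_mono_set hwt_int1
          (Filter.Eventually.of_forall fun y => Real.rpow_nonneg (hw0 y) t)
          (HasSubset.Subset.eventuallyLE hsball)
      have step2 : ∫ y in ball (0:E) 1, w y ^ t ≤ ∫ y in ball (0:E) 1, (w y ^ ε + 1) := by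
        apply setIntegral_mono_on hwt_int1 hsum_int measurableSet_ball
        intro y _
        rcases le_or_gt 1 (w y) with h1 | h1
        · have := Real.rpow_le_rpow_of_exponent_le h1 htε; linarith
        · have := Real.rpow_le_one (hw0 y) h1.le ht0.le
          have := Real.rpow_nonneg (hw0 y) ε; linarith
      have step3 : ∫ y in ball (0:E) 1, (w y ^ ε + 1) =
          (∫ y in ball (0:E) 1, w y ^ ε) + c := by
        rw [integral_add hwε_int hone_int, setIntegral_const, smul_eq_mul, mul_one, hc_def]; rfl
      linarith
    -- integral bound
    have hI1 : ∫ y in ball x₀ ρ, w y ≤ (2 ^ p * w x₀) ^ (1 - t) * (1 + c) := by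
      have hBnn : (0:ℝ) ≤ 2 ^ p * w x₀ := by positivity
      have hs1 : ∫ y in ball x₀ ρ, w y ≤
          ∫ y in ball x₀ ρ, w y ^ t * (2 ^ p * w x₀) ^ (1 - t) := by
        apply setIntegral_mono_on hw_int (hwt_int.mul_const _) measurableSet_ball
        intro y hy
        rcases (hw0 y).lt_or_eq with h0 | h0
        · have e1 : w y = w y ^ t * w y ^ (1 - t) := by
            rw [← Real.rpow_add h0]; norm_num
          nth_rewrite 1 [e1]
          exact mul_le_mul_of_nonneg_left
            (Real.rpow_le_rpow (hw0 y) (hB y hy) (sub_nonneg.mpr ht1.le))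
            (Real.rpow_nonneg (hw0 y) t)
        · rw [← h0, Real.zero_rpow ht0.ne', zero_mul]
      have hs2 : ∫ y in ball x₀ ρ, w y ^ t * (2 ^ p * w x₀) ^ (1 - t) =
          (∫ y in ball x₀ ρ, w y ^ t) * (2 ^ p * w x₀) ^ (1 - t) :=
        integral_mul_const _ _
      calc ∫ y in ball x₀ ρ, w y ≤ (∫ y in ball x₀ ρ, w y ^ t) * (2 ^ p * w x₀) ^ (1 - t) := by
            rw [← hs2]; exact hs1
        _ ≤ (1 + c) * (2 ^ p * w x₀) ^ (1 - t) :=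
            mul_le_mul_of_nonneg_right hI2 (Real.rpow_nonneg hBnn _)
        _ = (2 ^ p * w x₀) ^ (1 - t) * (1 + c) := by ring
    -- mean value
    have hval : (volume (ball x₀ ρ)).toReal = ρ ^ d * c := by
      rw [Measure.addHaar_ball_of_pos volume x₀ hρ, ENNReal.toReal_mul,
        ENNReal.toReal_ofReal (by positivity), finrank_euclideanSpace_fin]
    have hρdc : (0:ℝ) < ρ ^ d * c := by positivity
    have hmean : w x₀ ≤ (ρ ^ d * c)⁻¹ * ∫ y in ball x₀ ρ, w y := by
      have := hsub x₀ ρ hρ hsball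
      rwa [setAverage_eq, measureReal_def, hval, smul_eq_mul] at this
    have hchain : w x₀ ≤ (ρ ^ d * c)⁻¹ * ((2 ^ p * w x₀) ^ (1 - t) * (1 + c)) :=
      hmean.trans (mul_le_mul_of_nonneg_left hI1 (inv_nonneg.2 hρdc.le))
    -- cancel W^{1-t}
    have hexp : ((2:ℝ) ^ p * w x₀) ^ (1 - t) = ((2:ℝ) ^ p) ^ (1 - t) * w x₀ ^ (1 - t) :=
      Real.mul_rpow h2p.le (hw0 x₀)
    have h1t : (0:ℝ) < w x₀ ^ (1 - t) := Real.rpow_pos_of_pos hW _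
    have hWt : w x₀ ^ t ≤ (ρ ^ d * c)⁻¹ * (((2:ℝ) ^ p) ^ (1 - t) * (1 + c)) := by
      apply le_of_mul_le_mul_right _ h1t
      calc w x₀ ^ t * w x₀ ^ (1 - t) = w x₀ := by
            rw [← Real.rpow_add hW, show t + (1 - t) = 1 by ring, Real.rpow_one]
        _ ≤ (ρ ^ d * c)⁻¹ * (((2:ℝ) ^ p) ^ (1 - t) * w x₀ ^ (1 - t) * (1 + c)) := by
            rw [hexp] at hchain; linarith [hchain]
        _ = (ρ ^ d * c)⁻¹ * (((2:ℝ) ^ p) ^ (1 - t) * (1 + c)) * w x₀ ^ (1 - t) := by ring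
    -- bound F x₀ ^ t
    have hKnn : 0 ≤ F x₀ := h0.le
    have hKt : F x₀ ^ t ≤ C₀ := by
      have e1 : F x₀ ^ t = δ ^ (d:ℕ) * w x₀ ^ t := by
        rw [hFx₀, Real.mul_rpow (Real.rpow_nonneg hδ0 _) (hw0 x₀),
          ← Real.rpow_natCast δ d, ← Real.rpow_mul hδ0]
        congr 2
        rw [hp_def]; field_simp
      have e2 : δ ^ (d:ℕ) = 2 ^ d * ρ ^ d := by
        rw [show δ = 2 * ρ by rw [hρ_def]; ring, mul_pow]
      rw [e1, e2]
      calc 2 ^ d * ρ ^ d * w x₀ ^ t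
          ≤ 2 ^ d * ρ ^ d * ((ρ ^ d * c)⁻¹ * (((2:ℝ) ^ p) ^ (1 - t) * (1 + c))) := by
            apply mul_le_mul_of_nonneg_left hWt (by positivity)
        _ = C₀ := by
            rw [hC₀_def]
            have habc : ∀ a b A B : ℝ, a ≠ 0 → b ≠ 0 →
                A * a * ((a * b)⁻¹ * (B * (1 + b))) = A * ((1 + b) / b) * B := by
              intro a b A B ha hb; field_simp
            exact habc (ρ ^ d) c (2 ^ d) (((2:ℝ) ^ p) ^ (1 - t))
              (by positivity) hc.ne'
    calc F x₀ = (F x₀ ^ t) ^ (1/t) := by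
          rw [← Real.rpow_mul hKnn, mul_one_div, div_self ht0.ne', Real.rpow_one]
      _ ≤ C₀ ^ (1/t) := Real.rpow_le_rpow (Real.rpow_nonneg hKnn _) hKt (by positivity)
  -- conclude
  have hxn : ‖x‖ < 1/2 := mem_ball_zero_iff.mp hx
  have hFx : F x ≤ F x₀ :=
    hx₀max (mem_closedBall_zero_iff.mpr (by linarith [norm_nonneg x]))
  have h4 : ((4:ℝ) ^ p)⁻¹ * w x ≤ F x := by
    rw [← Real.inv_rpow (by norm_num) p]
    exact mul_le_mul_of_nonneg_right
      (Real.rpow_le_rpow (by norm_num) (by linarith) hp.le) (hw0 x)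
  have h4p : (0:ℝ) < (4:ℝ) ^ p := Real.rpow_pos_of_pos (by norm_num) _
  rw [← inv_mul_le_iff₀ h4p]
  exact h4.trans (hFx.trans key)
end

section
/- Let Ω ⊂ B_1 ⊂ ℝ^d be open satisfying the exterior density bound |B_r(z) \ Ω| ≥ μ|B_r(z)| for every z ∈ ∂Ω ∩ B_1 and r ∈ (0, 1 - |z|). Let w : B_1 → ℝ be continuous, nonnegative, vanishing on B_1 \ Ω, and subharmonic on B_1. Let x_0 ∈ Ω ∩ B_{1/2} with R := dist(x_0, ∂Ω), suppose ρ ≥ 2R with B_ρ(x_0) ⊂ B_1. Then there exists x_1 ∈ B_ρ(x_0) with w(x_1) ≥ (1 + 2^{-d} μ) w(x_0). -/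
open MeasureTheory Metric Filter Topology

/-- One growth step in the Krylov–Safonov-type argument: for a nonnegative subharmonic
`w` vanishing outside `Ω`, with the exterior density bound on `Ω`, a point `x₀ ∈ Ω`
at distance `R` from `∂Ω` and a radius `ρ ≥ 2R` with `B_ρ(x₀) ⊆ B₁`, there is
`x₁ ∈ B_ρ(x₀)` with `w(x₁) ≥ (1 + 2^{-d}μ) w(x₀)`. -/
theorem stmt_15 (d : ℕ) (hd : 0 < d) (μ : ℝ) (hμ : 0 < μ)
    (Ω : Set (EuclideanSpace ℝ (Fin d))) (hΩ : IsOpen Ω) (hΩ1 : Ω ⊆ ball 0 1)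
    (hdens : ∀ z ∈ frontier Ω ∩ ball (0 : EuclideanSpace ℝ (Fin d)) 1,
      ∀ r, 0 < r → r < 1 - ‖z‖ →
      μ * (volume (ball z r)).toReal ≤ (volume (ball z r \ Ω)).toReal)
    (w : EuclideanSpace ℝ (Fin d) → ℝ) (hwc : Continuous w) (hw0 : ∀ x, 0 ≤ w x)
    (hvan : ∀ x ∈ ball (0 : EuclideanSpace ℝ (Fin d)) 1 \ Ω, w x = 0)
    (hsub : ∀ x r, 0 < r → ball x r ⊆ ball (0 : EuclideanSpace ℝ (Fin d)) 1 →
      w x ≤ ⨍ y in ball x r, w y)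
    (x₀ : EuclideanSpace ℝ (Fin d))
    (hx₀ : x₀ ∈ Ω ∩ ball (0 : EuclideanSpace ℝ (Fin d)) (1/2))
    (ρ : ℝ) (hρ : 2 * infDist x₀ (frontier Ω) ≤ ρ)
    (hρ1 : ball x₀ ρ ⊆ ball (0 : EuclideanSpace ℝ (Fin d)) 1) :
    ∃ x₁ ∈ ball x₀ ρ, (1 + 2 ^ (-(d:ℝ)) * μ) * w x₀ ≤ w x₁ := by
  obtain ⟨hx₀Ω, hx₀half⟩ := hx₀
  haveI : Nonempty (Fin d) := Fin.pos_iff_nonempty.mp hd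
  haveI : Nontrivial (EuclideanSpace ℝ (Fin d)) := by
    refine ⟨EuclideanSpace.single ⟨0, hd⟩ (1:ℝ), 0, fun h => ?_⟩
    have := congrArg norm h
    simp [EuclideanSpace.norm_single] at this
  set R := infDist x₀ (frontier Ω) with hRdef
  -- the frontier is nonempty
  have hfne : (frontier Ω).Nonempty := by
    rw [Set.nonempty_iff_ne_empty]
    intro h
    rcases isClopen_iff.mp (isClopen_iff_frontier_eq_empty.mpr h) with h1 | h1
    · exact absurd (h1 ▸ hx₀Ω) (Set.notMem_empty x₀)
    · have : (EuclideanSpace.single (⟨0, hd⟩ : Fin d) (1:ℝ)) ∈ Ω := h1 ▸ Set.mem_univ _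
      have := hΩ1 this
      simp [EuclideanSpace.norm_single, mem_ball_zero_iff] at this
  have hRpos : 0 < R := by
    refine (isClosed_frontier.notMem_iff_infDist_pos hfne).mp ?_
    rw [hΩ.frontier_eq]
    exact fun hx => hx.2 hx₀Ω
  have hρpos : 0 < ρ := lt_of_lt_of_le (by linarith) hρ
  -- projection of x₀ to the frontier
  have hcomp : IsCompact (frontier Ω) := by
    refine (isCompact_closedBall (0 : EuclideanSpace ℝ (Fin d)) 1).of_isClosed_subset
      isClosed_frontier ?_
    refine frontier_subset_closure.trans ?_
    refine (closure_mono hΩ1).trans closure_ball_subset_closedBall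
  obtain ⟨z₀, hz₀f, hz₀d⟩ := hcomp.exists_infDist_eq_dist hfne x₀
  have hdistz : dist z₀ x₀ = R := by rw [hRdef, hz₀d, dist_comm]
  have hz₀norm : ‖z₀‖ ≤ ‖x₀‖ + R := by
    have h1 : dist z₀ 0 ≤ dist z₀ x₀ + dist x₀ 0 := dist_triangle _ _ _
    rw [dist_zero_right, dist_zero_right, hdistz] at h1
    linarith
  have hRρ : R ≤ ρ / 2 := by linarith
  -- key: points at distance < ρ from x₀ have norm < 1
  have hkey : ∀ t : ℝ, 0 < t → t < ρ → ‖x₀‖ + t < 1 := by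
    intro t ht htρ
    by_cases hx : x₀ = 0
    · have hy : (t • EuclideanSpace.single (⟨0, hd⟩ : Fin d) (1:ℝ)) ∈ ball x₀ ρ := by
        rw [hx, mem_ball_zero_iff, norm_smul]
        simpa [EuclideanSpace.norm_single, abs_of_pos ht] using htρ
      have := hρ1 hy
      rw [mem_ball_zero_iff, norm_smul] at this
      simp only [EuclideanSpace.norm_single, Real.norm_eq_abs, abs_of_pos ht, mul_one] at this
      simpa [hx] using this
    · have hx0 : 0 < ‖x₀‖ := norm_pos_iff.mpr hx
      set y := (1 + t / ‖x₀‖) • x₀ with hy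
      have hyb : y ∈ ball x₀ ρ := by
        rw [mem_ball, dist_eq_norm, hy]
        have : (1 + t / ‖x₀‖) • x₀ - x₀ = (t / ‖x₀‖) • x₀ := by
          rw [add_smul, one_smul]; abel
        rw [this, norm_smul]
        rw [Real.norm_eq_abs, abs_of_pos (by positivity)]
        rw [div_mul_cancel₀ _ hx0.ne']
        exact htρ
      have := hρ1 hyb
      rw [mem_ball_zero_iff, hy, norm_smul, Real.norm_eq_abs,
        abs_of_pos (by positivity)] at this
      calc ‖x₀‖ + t = (1 + t / ‖x₀‖) * ‖x₀‖ := by field_simp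
        _ < 1 := this
  have hz₀ball : z₀ ∈ ball (0 : EuclideanSpace ℝ (Fin d)) 1 := by
    rw [mem_ball_zero_iff]
    have := hkey R hRpos (by linarith)
    linarith
  -- volume normalization
  set v := (volume (ball (0 : EuclideanSpace ℝ (Fin d)) 1)).toReal with hvdef
  have hvpos : 0 < v := by
    rw [hvdef]
    exact ENNReal.toReal_pos (measure_ball_pos volume 0 one_pos).ne' measure_ball_lt_top.ne
  have hvol : ∀ (x : EuclideanSpace ℝ (Fin d)) (r : ℝ), 0 ≤ r →
      (volume (ball x r)).toReal = r ^ d * v := by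
    intro x r hr
    rw [Measure.addHaar_ball volume x hr, finrank_euclideanSpace_fin, ENNReal.toReal_mul,
      ENNReal.toReal_ofReal (by positivity), hvdef]
  -- the density estimate transported to B_ρ(x₀)
  set C := (volume (ball x₀ ρ \ Ω)).toReal with hCdef
  have hdens' : ∀ r : ℝ, r ∈ Set.Ioo 0 (ρ/2) → μ * (r ^ d * v) ≤ C := by
    rintro r ⟨hr, hrρ⟩
    have h1 : r < 1 - ‖z₀‖ := by
      have := hkey (ρ/2 + r) (by linarith) (by linarith)
      linarith
    have h2 := hdens z₀ ⟨hz₀f, hz₀ball⟩ r hr h1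
    rw [hvol z₀ r hr.le] at h2
    refine h2.trans ?_
    refine ENNReal.toReal_mono (by exact ((measure_mono Set.diff_subset).trans_lt
      measure_ball_lt_top).ne) (measure_mono ?_)
    refine Set.diff_subset_diff_left ?_
    refine ball_subset_ball' ?_
    rw [hdistz]
    linarith
  have hC : μ * ((ρ/2) ^ d * v) ≤ C := by
    have hcont : ContinuousWithinAt (fun r : ℝ => μ * (r ^ d * v))
        (Set.Ioo 0 (ρ/2)) (ρ/2) := (Continuous.continuousWithinAt (by fun_prop))
    haveI : (nhdsWithin (ρ/2) (Set.Ioo 0 (ρ/2))).NeBot := by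
      refine mem_closure_iff_nhdsWithin_neBot.mp ?_
      rw [closure_Ioo (by linarith : (0:ℝ) ≠ ρ/2)]
      exact ⟨le_of_lt (by linarith), le_refl _⟩
    exact le_of_tendsto hcont (eventually_nhdsWithin_of_forall hdens')
  -- sub-mean value inequality
  have havg := hsub x₀ ρ hρpos hρ1
  set B := ball x₀ ρ with hBdef
  have hBmeas : MeasurableSet B := measurableSet_ball
  have hΩmeas : MeasurableSet Ω := hΩ.measurableSet
  have hVfin : volume B ≠ ⊤ := measure_ball_lt_top.ne
  set V := (volume B).toReal with hVdef
  have hVpos : 0 < V := by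
    rw [hVdef, hBdef, hvol x₀ ρ hρpos.le]; positivity
  -- the maximum of w on the closed ball
  obtain ⟨xm, hxm, hmax⟩ := (isCompact_closedBall x₀ ρ).exists_isMaxOn
    ⟨x₀, mem_closedBall_self hρpos.le⟩ hwc.continuousOn
  set M := w xm with hMdef
  have hM0 : 0 ≤ M := hw0 xm
  have hMx₀ : w x₀ ≤ M := hmax (mem_closedBall_self hρpos.le)
  -- integrability
  have hint : IntegrableOn w B volume :=
    (hwc.locallyIntegrable.integrableOn_isCompact (isCompact_closedBall x₀ ρ)).mono_set
      ball_subset_closedBall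
  -- bound the integral
  have hI : ∫ y in B, w y ≤ M * V - M * C := by
    have hsplit : ∫ y in B, w y = (∫ y in B ∩ Ω, w y) + ∫ y in B \ Ω, w y := by
      rw [← setIntegral_union (Set.disjoint_left.mpr fun a ha hb => hb.2 ha.2)
        (hBmeas.diff hΩmeas) (hint.mono_set Set.inter_subset_left)
        (hint.mono_set Set.diff_subset), Set.inter_union_diff]
    have hzero : ∫ y in B \ Ω, w y = 0 := by
      refine setIntegral_eq_zero_of_forall_eq_zero fun x hx => ?_
      exact hvan x ⟨hρ1 hx.1, hx.2⟩
    have hbound : ∫ y in B ∩ Ω, w y ≤ M * (volume (B ∩ Ω)).toReal := by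
      have := setIntegral_mono_on (hint.mono_set Set.inter_subset_left)
        ((integrableOn_const_iff).mpr (Or.inr ((measure_mono Set.inter_subset_left).trans_lt
          measure_ball_lt_top))) (hBmeas.inter hΩmeas)
        (fun x hx => hmax (ball_subset_closedBall hx.1))
      rwa [setIntegral_const, smul_eq_mul, mul_comm] at this
    have hmeas : (volume (B ∩ Ω)).toReal = V - C := by
      have h1 : volume (B ∩ Ω) + volume (B \ Ω) = volume B := measure_inter_add_diff B hΩmeas
      have h2 : volume (B ∩ Ω) ≠ ⊤ := ((measure_mono Set.inter_subset_left).trans_lt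
        measure_ball_lt_top).ne
      have h3 : volume (B \ Ω) ≠ ⊤ := ((measure_mono Set.diff_subset).trans_lt
        measure_ball_lt_top).ne
      have := congrArg ENNReal.toReal h1
      rw [ENNReal.toReal_add h2 h3] at this
      rw [hVdef, hCdef]
      linarith
    rw [hsplit, hzero, add_zero]
    calc ∫ y in B ∩ Ω, w y ≤ M * (volume (B ∩ Ω)).toReal := hbound
      _ = M * (V - C) := by rw [hmeas]
      _ = M * V - M * C := by ring
  -- conclude the one-step growth
  set c : ℝ := 2 ^ (-(d:ℝ)) * μ with hcdef
  have hcpos : 0 < c := by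
    rw [hcdef]; positivity
  have hcV : c * V ≤ C := by
    have h1 : c * V = μ * ((ρ/2) ^ d * v) := by
      rw [hcdef, hVdef, hBdef, hvol x₀ ρ hρpos.le, div_pow,
        Real.rpow_neg (by norm_num : (0:ℝ) ≤ 2), Real.rpow_natCast]
      field_simp
    rw [h1]; exact hC
  have hwx₀ : w x₀ ≤ (1 - c) * M := by
    have h1 : w x₀ ≤ V⁻¹ * (M * V - M * C) := by
      rw [setAverage_eq, smul_eq_mul] at havg
      have h2 : V⁻¹ * (∫ y in B, w y) ≤ V⁻¹ * (M * V - M * C) :=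
        mul_le_mul_of_nonneg_left hI (inv_nonneg.mpr hVpos.le)
      exact havg.trans h2
    have h2 : M * (c * V) ≤ M * C := mul_le_mul_of_nonneg_left hcV hM0
    calc w x₀ ≤ V⁻¹ * (M * V - M * C) := h1
      _ ≤ V⁻¹ * (M * V - M * (c * V)) := by
          refine mul_le_mul_of_nonneg_left (by linarith) (by positivity)
      _ = (1 - c) * M := by field_simp
  by_cases hw : w x₀ = 0
  · refine ⟨x₀, mem_ball_self hρpos, ?_⟩
    rw [hw, mul_zero]
  · have hwpos : 0 < w x₀ := lt_of_le_of_ne (hw0 x₀) (Ne.symm hw)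
    have hMpos : 0 < M := lt_of_lt_of_le hwpos hMx₀
    have hstrict : (1 + c) * w x₀ < M := by
      have h4 : (1 + c) * w x₀ ≤ (1 + c) * ((1 - c) * M) :=
        mul_le_mul_of_nonneg_left hwx₀ (by linarith)
      nlinarith [mul_pos (mul_pos hcpos hcpos) hMpos]
    have hopen : IsOpen {y | (1 + c) * w x₀ < w y} :=
      isOpen_lt continuous_const hwc
    have hxmcl : xm ∈ closure (ball x₀ ρ) := by
      rwa [closure_ball x₀ hρpos.ne']
    obtain ⟨x₁, hx₁U, hx₁b⟩ := mem_closure_iff.mp hxmcl _ hopen hstrict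
    exact ⟨x₁, hx₁b, le_of_lt hx₁U⟩
end
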